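/- arXiv:1102.1080 — 5 statements merged into one kernel-verified Lean document; each statement's English description precedes it below -/
import Mathlib

section
/- If p : (X̃, x̃) → (X, x) is a covering map with X̃ path connected, then the small generated subgroup π₁^sg(X,x) is contained in the image subgroup p_*π₁(X̃, x̃). -/
/-!
A small loop at `y` is homotopic to a loop inside an evenly covered neighbourhood of `y`, and such
a loop lifts through a local section to a closed loop at every point of the fibre, so its
monodromy is trivial. Monodromy is functorial, hence conjugates of small loops along paths, and the
subgroup they generate, act trivially on the fibre over the base point. Finally, a loop at `p x₀`
whose lift from `x₀` closes up is the image of that closed lift.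
-/

open FundamentalGroup

attribute [local instance] Path.Homotopic.setoid

noncomputable section

/-- A loop `β` based at `y` is a *small loop* if it is homotopic (rel endpoints) to a loop
contained in every open neighborhood of `y`. -/
def IsSmallLoop {X : TopCat} {y : X} (β : Path y y) : Prop :=
  ∀ U : Set X, IsOpen U → y ∈ U →
    ∃ β' : Path y y, (∀ t, β' t ∈ U) ∧ Path.Homotopic β β'

/-- The small loop group `π₁ˢ(X, x)`: the set of homotopy classes of small loops at `x`. -/
def smallLoopSet {X : TopCat} (x : X) : Set (FundamentalGroup X x) :=
  {g | ∃ β : Path x x, IsSmallLoop β ∧ g = fromPath ⟦β⟧}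

/-- The SG subgroup `π₁ˢᵍ(X, x)`: generated by conjugates of small loop classes along paths. -/
def sgSubgroup {X : TopCat} (x : X) : Subgroup (FundamentalGroup X x) :=
  Subgroup.closure {g | ∃ (y : X) (α : Path x y) (β : Path y y),
    IsSmallLoop β ∧ g = fromPath ⟦α.trans (β.trans α.symm)⟧}

/-- The quotient topology on the fundamental group, coinduced from the loop space
(with the compact-open topology). -/
def qtop {X : TopCat} (x : X) : TopologicalSpace (FundamentalGroup X x) :=
  TopologicalSpace.coinduced (fun β : Path x x => fromPath ⟦β⟧) inferInstance

namespace IsCoveringMap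

open unitInterval

variable {E : Type*} [TopologicalSpace E]

theorem monodromy_mk_eq_of_forall_mem_baseSet {X F : Type*} [TopologicalSpace X]
    [TopologicalSpace F] {p : E → X} (cov : IsCoveringMap p) (T : Bundle.Trivialization F p)
    {y : X} (β : Path y y) (hβ : ∀ t, β t ∈ T.baseSet) (e : p ⁻¹' {y}) :
    cov.monodromy (.mk β) e = e := by
  obtain ⟨e, rfl⟩ := e
  have he : e ∈ T.source := T.mem_source.2 (β.source ▸ hβ 0)
  let Γ : C(I, E) :=
    ⟨fun t ↦ T.toPartialEquiv.symm (β t, (T e).2),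
      T.continuousOn_symm_prodMk_left.comp_continuous β.continuous hβ⟩
  have hΓ : Γ = cov.liftPath β e β.source :=
    (cov.eq_liftPath_iff' _).2 ⟨funext fun t ↦ T.proj_symm_apply' (hβ t), by
      simpa [Γ] using T.symm_apply_mk_proj he⟩
  refine Subtype.ext ?_
  show cov.liftPath β e _ 1 = e
  simpa [← hΓ, Γ] using T.symm_apply_mk_proj he

theorem monodromy_mk_eq_id_of_isSmallLoop {X : TopCat} {p : E → X} (cov : IsCoveringMap p)
    {y : X} {β : Path y y} (hβ : IsSmallLoop β) : cov.monodromy (.mk β) = id := by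
  funext e
  have : Nonempty (p ⁻¹' {y}) := ⟨e⟩
  let T := (cov y).toTrivialization
  obtain ⟨β', hβ'T, hββ'⟩ := hβ T.baseSet T.open_baseSet (cov y).mem_toTrivialization_baseSet
  rw [Path.Homotopic.Quotient.eq.2 hββ']
  exact cov.monodromy_mk_eq_of_forall_mem_baseSet T β' hβ'T e

theorem monodromy_conj_eq_id {X : Type*} [TopologicalSpace X] {p : E → X}
    (cov : IsCoveringMap p) {x y : X} (α : Path.Homotopic.Quotient x y)
    {β : Path.Homotopic.Quotient y y} (hβ : cov.monodromy β = id) :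
    cov.monodromy (α.trans (β.trans α.symm)) = id := by
  funext e
  rw [monodromy_trans_apply, monodromy_trans_apply, hβ, id, ← monodromy_trans_apply,
    Path.Homotopic.Quotient.trans_symm, monodromy_refl]

theorem exists_path_eq_map_of_mem_ker_monodromyPerm {X : Type*} [TopologicalSpace X]
    {p : E → X} (cov : IsCoveringMap p) {e : E} {γ : FundamentalGroup X (p e)}
    (hγ : γ ∈ (cov.monodromyPerm (p e)).ker) :
    ∃ Γ : Path e e, γ = fromPath (.mk (Γ.map cov.continuous)) := by
  obtain ⟨γ, rfl⟩ := Path.Homotopic.Quotient.mk_surjective γ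
  have hlift : cov.liftPath γ e γ.source 1 = e :=
    congrArg Subtype.val (DFunLike.congr_fun hγ (⟨e, rfl⟩ : p ⁻¹' {p e}))
  refine ⟨⟨cov.liftPath γ e γ.source, cov.liftPath_zero .., hlift⟩, congrArg _ ?_⟩
  ext t
  exact (congrFun (cov.liftPath_lifts γ e γ.source) t).symm

theorem sgSubgroup_le_ker_monodromyPerm {X : TopCat} {p : E → X} (cov : IsCoveringMap p)
    (x : X) : sgSubgroup x ≤ (cov.monodromyPerm x).ker := by
  refine (Subgroup.closure_le _).2 ?_
  rintro _ ⟨y, α, β, hβ, rfl⟩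
  exact DFunLike.ext' (cov.monodromy_conj_eq_id (.mk α) (cov.monodromy_mk_eq_id_of_isSmallLoop hβ))

end IsCoveringMap

theorem sgSubgroup_le_image_of_covering_general {E X : TopCat} (p : E → X) (hp : IsCoveringMap p)
    (x₀ : E) :
    ∀ g ∈ sgSubgroup (p x₀), ∃ γ : Path x₀ x₀, g = fromPath ⟦γ.map hp.continuous⟧ :=
  fun _ hg ↦
    hp.exists_path_eq_map_of_mem_ker_monodromyPerm (hp.sgSubgroup_le_ker_monodromyPerm _ hg)

/-- If `p : (X̃, x₀) → (X, x)` is a covering map with `X̃` path connected, then the SG subgroup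
`π₁ˢᵍ(X, x)` is contained in the image subgroup `p₊π₁(X̃, x₀)`. -/
theorem sgSubgroup_le_image_of_covering {E X : TopCat} (p : E → X) (hp : IsCoveringMap p)
    (hpc : PathConnectedSpace E) (x₀ : E) :
    ∀ g ∈ sgSubgroup (p x₀), ∃ γ : Path x₀ x₀, g = fromPath ⟦γ.map hp.continuous⟧ :=
  sgSubgroup_le_image_of_covering_general p hp x₀
end
end

section
/- Every homotopy class of a small loop at x lies in the closure of the trivial element in the quasitopological fundamental group: π₁^s(X,x) ⊆ closure({[e_x]}) in π₁^qtop(X,x). -/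
open FundamentalGroup

attribute [local instance] Path.Homotopic.setoid

noncomputable section

/-! If `[β] ∈ V` with `V` open, the loops `γ` with `[β · γ⁻¹] ∈ V` form an open set of loops
containing the constant loop. In the compact-open topology such a set contains every loop lying in
some small enough open neighbourhood `O` of `x`; a small loop `β` has a representative `β'` in `O`,
and then `1 = [β · β'⁻¹] ∈ V`. -/

open Filter Topology Set

theorem ContinuousMap.exists_isOpen_forall_mem_of_mem_nhds_const {Y X : Type*}
    [TopologicalSpace Y] [TopologicalSpace X] {x : X} {W : Set C(Y, X)}
    (hW : W ∈ 𝓝 (ContinuousMap.const Y x)) :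
    ∃ O : Set X, IsOpen O ∧ x ∈ O ∧ ∀ f : C(Y, X), (∀ y, f y ∈ O) → f ∈ W := by
  have hmono : Monotone fun O : Set X => {f : C(Y, X) | ∀ y, f y ∈ O} :=
    fun O O' h f hf y => h (hf y)
  have hle : (𝓝 x).lift' (fun O => {f : C(Y, X) | ∀ y, f y ∈ O}) ≤ 𝓝 (const Y x) := by
    rw [nhds_compactOpen]
    simp only [le_iInf_iff, le_principal_iff]
    intro K _ U hU hKU
    -- a subbasic set `{g | MapsTo g K U}` contains the constant map iff `K = ∅` or `x ∈ U`
    rcases K.eq_empty_or_nonempty with rfl | ⟨k, hk⟩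
    · simp only [mapsTo_empty, ofPred_true, univ_mem]
    · filter_upwards [mem_lift' (hU.mem_nhds (hKU hk))] with f hf y _ using hf y
  obtain ⟨O, ⟨hxO, hO⟩, hOW⟩ := ((nhds_basis_opens x).lift' hmono).mem_iff.mp (hle hW)
  exact ⟨O, hO, hxO, hOW⟩

theorem Path.exists_isOpen_forall_mem_of_mem_nhds_refl {X : Type*} [TopologicalSpace X]
    {x : X} {W : Set (Path x x)} (hW : W ∈ 𝓝 (Path.refl x)) :
    ∃ O : Set X, IsOpen O ∧ x ∈ O ∧ ∀ γ : Path x x, (∀ t, γ t ∈ O) → γ ∈ W := by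
  rw [nhds_induced] at hW
  obtain ⟨W', hW', hW'W⟩ := hW
  obtain ⟨O, hO, hxO, hOW'⟩ := ContinuousMap.exists_isOpen_forall_mem_of_mem_nhds_const hW'
  exact ⟨O, hO, hxO, fun γ hγ => hW'W (hOW' γ hγ)⟩

theorem IsSmallLoop.refl_mem_closure {X : TopCat} {y : X} {β : Path y y} (hβ : IsSmallLoop β) :
    Path.refl y ∈ closure {γ : Path y y | β.Homotopic γ} := by
  rw [mem_closure_iff_nhds]
  intro W hW
  obtain ⟨O, hO, hyO, hOW⟩ := Path.exists_isOpen_forall_mem_of_mem_nhds_refl hW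
  obtain ⟨β', hβ'O, hββ'⟩ := hβ O hO hyO
  exact ⟨β', hOW β' hβ'O, hββ'⟩

/-- Every small loop class at `x` lies in the closure of the trivial element in
`π₁ᑫᵗᵒᵖ(X, x)`. -/
theorem smallLoopSet_subset_closure_one {X : TopCat} (x : X) :
    smallLoopSet x ⊆ @closure _ (qtop x) {(1 : FundamentalGroup X x)} := by
  let := qtop x
  rintro _ ⟨β, hβ, rfl⟩
  have hq : Continuous fun γ : Path x x => fromPath ⟦γ⟧ := continuous_coinduced_rng
  have hT : Continuous fun γ : Path x x => β.trans γ.symm :=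
    continuous_const.path_trans Path.continuous_symm
  have hnull : MapsTo (fun γ : Path x x => fromPath ⟦β.trans γ.symm⟧) {γ | β.Homotopic γ} {1} :=
    fun γ hγ => Quotient.sound ((hγ.hcomp (.refl γ.symm)).trans (Path.Homotopic.trans_symm γ))
  have hβ_eq : fromPath ⟦β.trans (Path.refl x).symm⟧ = fromPath ⟦β⟧ :=
    Quotient.sound (Path.Homotopic.trans_refl β)
  exact hβ_eq ▸ map_mem_closure (f := fun γ : Path x x => fromPath ⟦β.trans γ.symm⟧)
    (hq.comp hT) hβ.refl_mem_closure hnull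
end
end

section
/- If the trivial element {[e_x]} is a closed subset of π₁^qtop(X,x), then X is homotopically Hausdorff at x, i.e., the only small loop class at x is trivial: π₁^s(X,x) = 1. -/
open FundamentalGroup

attribute [local instance] Path.Homotopic.setoid

noncomputable section

lemma aux_gen {Y : Type*} [TopologicalSpace Y] {x : Y} {c : C(unitInterval, Y)}
    (hc : ∀ t, c t = x) {O : Set C(unitInterval, Y)} (hO : IsOpen O) (hmem : c ∈ O) :
    ∃ U : Set Y, IsOpen U ∧ x ∈ U ∧ ∀ f : C(unitInterval, Y), (∀ t, f t ∈ U) → f ∈ O := by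
  have hO' : TopologicalSpace.GenerateOpen
      (Set.image2 (fun K U ↦ {f : C(unitInterval, Y) | Set.MapsTo f K U})
        {K | IsCompact K} {t | IsOpen t}) O := hO
  clear hO
  induction hO' with
  | basic s hs =>
      obtain ⟨K, hK, U, hU, rfl⟩ := hs
      rcases K.eq_empty_or_nonempty with rfl | ⟨t0, ht0⟩
      · exact ⟨Set.univ, isOpen_univ, trivial, fun f _ => fun t ht => absurd ht (Set.notMem_empty t)⟩
      · refine ⟨U, hU, ?_, fun f hf => fun t _ => hf t⟩
        have := hmem ht0
        rwa [hc t0] at this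
  | univ => exact ⟨Set.univ, isOpen_univ, trivial, fun _ _ => trivial⟩
  | inter s t hgs hgt ih1 ih2 =>
      obtain ⟨U1, hU1, hx1, h1⟩ := ih1 hmem.1
      obtain ⟨U2, hU2, hx2, h2⟩ := ih2 hmem.2
      exact ⟨U1 ∩ U2, hU1.inter hU2, ⟨hx1, hx2⟩,
        fun f hf => ⟨h1 f fun t => (hf t).1, h2 f fun t => (hf t).2⟩⟩
  | sUnion S hgS ih =>
      obtain ⟨s, hsS, hcs⟩ := hmem
      obtain ⟨U, hU, hx, hall⟩ := ih s hsS hcs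
      exact ⟨U, hU, hx, fun f hf => ⟨s, hsS, hall f hf⟩⟩

lemma aux_path {X : Type*} [TopologicalSpace X] {x : X} {O : Set (Path x x)}
    (hO : IsOpen O) (hmem : Path.refl x ∈ O) :
    ∃ U : Set X, IsOpen U ∧ x ∈ U ∧ ∀ γ : Path x x, (∀ t, γ t ∈ U) → γ ∈ O := by
  rw [isOpen_induced_iff] at hO
  obtain ⟨O', hO', rfl⟩ := hO
  obtain ⟨U, hU, hxU, hall⟩ := aux_gen (c := (Path.refl x : C(unitInterval, X)))
    (fun t => rfl) hO' hmem
  exact ⟨U, hU, hxU, fun γ hγ => hall _ hγ⟩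

private theorem small_loop_trivial_aux {X : TopCat} (x : X)
    (h : @IsClosed _ (TopologicalSpace.coinduced (fun β : Path x x => fromPath ⟦β⟧) inferInstance)
      {(1 : FundamentalGroup X x)})
    (β : Path x x) (hsmall : ∀ U : Set X, IsOpen U → x ∈ U →
      ∃ β' : Path x x, (∀ t, β' t ∈ U) ∧ Path.Homotopic β β') :
    fromPath ⟦β⟧ = (1 : FundamentalGroup X x) := by
  by_contra hne
  set q : Path x x → FundamentalGroup X x := fun γ => fromPath ⟦γ⟧ with hq
  have h1 : @IsOpen _ (TopologicalSpace.coinduced q inferInstance)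
      {(1 : FundamentalGroup X x)}ᶜ := @IsClosed.isOpen_compl _ _ _ h
  have hOopen : IsOpen (q ⁻¹' {(1 : FundamentalGroup X x)}ᶜ) := isOpen_coinduced.mp h1
  have hT : Continuous (fun γ : Path x x => β.trans γ) :=
    Path.continuous_trans.comp (continuous_const.prodMk continuous_id)
  have hW : IsOpen ((fun γ : Path x x => β.trans γ) ⁻¹' (q ⁻¹' {(1 : FundamentalGroup X x)}ᶜ)) :=
    hOopen.preimage hT
  have hrefl : Path.refl x ∈ (fun γ : Path x x => β.trans γ) ⁻¹' (q ⁻¹' {(1 : FundamentalGroup X x)}ᶜ) := by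
    simp only [Set.mem_preimage]
    have : (⟦β.trans (Path.refl x)⟧ : Path.Homotopic.Quotient x x) = ⟦β⟧ :=
      Quotient.sound ⟨Path.Homotopy.transRefl β⟩
    simp only [hq, this]
    exact hne
  obtain ⟨U, hU, hxU, hall⟩ := aux_path hW hrefl
  obtain ⟨β', hβ'U, hhom⟩ := hsmall U hU hxU
  have hδ : ∀ t, β'.symm t ∈ U := fun t => hβ'U _
  have hmem := hall β'.symm hδ
  -- hmem : q (β.trans β'.symm) ∈ {1}ᶜ
  apply hmem
  show q (β.trans β'.symm) ∈ ({1} : Set (FundamentalGroup X x))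
  have h2 : (⟦β.trans β'.symm⟧ : Path.Homotopic.Quotient x x) = ⟦Path.refl x⟧ := by
    have e1 : Path.Homotopic (β.trans β'.symm) (β'.trans β'.symm) :=
      Path.Homotopic.hcomp hhom (Path.Homotopic.refl _)
    have e2 : Path.Homotopic (Path.refl x) (β'.trans β'.symm) :=
      ⟨Path.Homotopy.reflTransSymm β'⟩
    exact Quotient.sound (e1.trans e2.symm)
  show q (β.trans β'.symm) = 1
  simp only [hq, h2]
  rfl


/-- If the trivial element is closed in `π₁ᑫᵗᵒᵖ(X, x)`, then `X` is homotopically Hausdorff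
at `x`: the only small loop class at `x` is trivial. -/
theorem homotopically_hausdorff_of_closed_one {X : TopCat} (x : X)
    (h : @IsClosed _ (qtop x) {(1 : FundamentalGroup X x)}) :
    ∀ g ∈ smallLoopSet x, g = 1 := by
  rintro g ⟨β, hsmall, rfl⟩
  exact small_loop_trivial_aux x h β hsmall
end
end

section
/- If X is a small generated space, i.e., π₁(X,x) = π₁^sg(X,x) for all x, then π₁^qtop(X,x) carries the indiscrete topology (and is in particular a topological group). -/
/-!
Let `U` be open in `π₁ᑫᵗᵒᵖ(X, x)` and `[δ] ∈ U`. For a path `α` from `x` to `y` the loop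
`δ ⬝ α ⬝ c_y ⬝ α⁻¹` (with `c_y` constant) represents `[δ]`, so it lies in the open preimage of `U`
in the loop space. A compact-open neighbourhood of it only constrains the constant piece `c_y` to
stay in some neighbourhood `W` of `y`; a small loop `β` has a representative inside `W`, which can
replace `c_y`. Hence `[α β α⁻¹] [δ] ∈ U`, i.e. `π₁ˢᵍ(X, x)` stabilises every open set, and when
`π₁ˢᵍ(X, x)` is the whole group a nonempty set stabilised by it is everything.
-/

open FundamentalGroup

attribute [local instance] Path.Homotopic.setoid

noncomputable section

open Set Filter Topology Pointwise

theorem ContinuousMap.exists_mem_nhds_of_eqOn_compl_of_mapsTo {α X : Type*} [TopologicalSpace α]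
    [TopologicalSpace X] {f : C(α, X)} {M : Set α} {y : X} (hf : ∀ t ∈ M, f t = y)
    {V : Set C(α, X)} (hV : V ∈ 𝓝 f) :
    ∃ W ∈ 𝓝 y, ∀ g : C(α, X), EqOn g f Mᶜ → MapsTo g M W → g ∈ V := by
  set G : Set X → Set C(α, X) := fun W => {g | EqOn g f Mᶜ ∧ MapsTo g M W}
  have hG : Monotone G := fun W W' hW g hg => ⟨hg.1, hg.2.mono_right hW⟩
  suffices (𝓝 y).lift' G ≤ 𝓝 f by
    obtain ⟨W, hW, hWV⟩ := (mem_lift'_sets hG).1 (this hV)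
    exact ⟨W, hW, fun g hgf hgM => hWV ⟨hgf, hgM⟩⟩
  rw [nhds_compactOpen]
  refine le_iInf₂ fun K _ => le_iInf₂ fun U hU => le_iInf fun hfKU => le_principal_iff.2 ?_
  refine (mem_lift'_sets hG).2 ?_
  by_cases hyU : y ∈ U
  · refine ⟨U, hU.mem_nhds hyU, fun g ⟨hgf, hgM⟩ t ht => ?_⟩
    by_cases htM : t ∈ M
    · exact hgM htM
    · rw [hgf htM]; exact hfKU ht
  · refine ⟨univ, univ_mem, fun g ⟨hgf, _⟩ t ht => ?_⟩
    have htM : t ∉ M := fun htM => hyU (hf t htM ▸ hfKU ht)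
    rw [hgf htM]; exact hfKU ht

namespace Path

variable {X : Type*} [TopologicalSpace X] {x y y' z : X}

theorem trans_trans_apply_mem_range (p : Path x y) (γ : Path y y') (q : Path y' z)
    {t : unitInterval} (ht : (t : ℝ) ∈ Ioc (1 / 2) (3 / 4)) :
    p.trans (γ.trans q) t ∈ range γ := by
  rw [trans_apply, dif_neg (not_le.2 ht.1), trans_apply, dif_pos]
  · exact mem_range_self _
  · change 2 * (t : ℝ) - 1 ≤ 1 / 2
    linarith [ht.2]

theorem trans_trans_apply_eq_of_notMem (p : Path x y) (γ γ' : Path y y') (q : Path y' z)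
    {t : unitInterval} (ht : (t : ℝ) ∉ Ioc (1 / 2) (3 / 4)) :
    p.trans (γ.trans q) t = p.trans (γ'.trans q) t := by
  rw [trans_apply, trans_apply]
  split_ifs with ht₁
  · rfl
  · have ht₂ : ¬ 2 * (t : ℝ) - 1 ≤ 1 / 2 := fun h => ht ⟨not_le.1 ht₁, by linarith⟩
    rw [trans_apply, trans_apply, dif_neg ht₂, dif_neg ht₂]

end Path

theorem TopologicalSpace.eq_top_of_forall_isOpen_stabilizer_eq_top {G : Type*} [Group G]
    (t : TopologicalSpace G) (h : ∀ U, IsOpen[t] U → MulAction.stabilizer G U = ⊤) : t = ⊤ := by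
  refine top_unique fun U hU => (isOpen_top_iff U).2 ?_
  refine U.eq_empty_or_nonempty.imp_right fun ⟨u, hu⟩ => eq_univ_of_forall fun g => ?_
  have hgu : g * u⁻¹ ∈ MulAction.stabilizer G U := h U hU ▸ Subgroup.mem_top _
  simpa using (MulAction.mem_stabilizer_set.1 hgu u).2 hu

section

variable {X : TopCat} {x y z : X}

theorem IsSmallLoop.symm {β : Path y y} (hβ : IsSmallLoop β) : IsSmallLoop β.symm := by
  intro U hU hyU
  obtain ⟨β', hβ'U, hββ'⟩ := hβ U hU hyU
  exact ⟨β'.symm, fun t => hβ'U _, hββ'.symm₂⟩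

theorem IsSmallLoop.exists_homotopic_trans_mem {β : Path y y} (hβ : IsSmallLoop β)
    (p : Path x y) (q : Path y z) {V : Set (Path x z)}
    (hV : V ∈ 𝓝 (p.trans ((Path.refl y).trans q))) :
    ∃ β' : Path y y, β.Homotopic β' ∧ p.trans (β'.trans q) ∈ V := by
  obtain ⟨V', hV', hV'V⟩ := mem_nhds_induced _ _ _ |>.1 hV
  have hconst : ∀ t ∈ ((↑) ⁻¹' Ioc (1 / 2 : ℝ) (3 / 4) : Set unitInterval),
      p.trans ((Path.refl y).trans q) t = y := fun t ht => by
    obtain ⟨s, hs⟩ := p.trans_trans_apply_mem_range (Path.refl y) q ht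
    exact hs.symm
  obtain ⟨W, hW, hWV'⟩ := ContinuousMap.exists_mem_nhds_of_eqOn_compl_of_mapsTo hconst hV'
  obtain ⟨W₀, hW₀W, hW₀, hyW₀⟩ := mem_nhds_iff.1 hW
  obtain ⟨β', hβ'W₀, hββ'⟩ := hβ W₀ hW₀ hyW₀
  refine ⟨β', hββ', hV'V (hWV' _ (fun t ht => ?_) fun t ht => ?_)⟩
  · exact p.trans_trans_apply_eq_of_notMem β' (Path.refl y) q ht
  · obtain ⟨s, hs⟩ := p.trans_trans_apply_mem_range β' q ht
    exact hW₀W (hs ▸ hβ'W₀ s)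

theorem fromPath_trans_conj (δ : Path x x) (α : Path x y) (γ : Path y y) :
    fromPath ⟦(δ.trans α).trans (γ.trans α.symm)⟧ =
      fromPath ⟦α.trans (γ.trans α.symm)⟧ * fromPath ⟦δ⟧ :=
  Quotient.sound ⟨Path.Homotopy.transAssoc δ α (γ.trans α.symm)⟩

theorem fromPath_conj_refl (α : Path x y) :
    fromPath ⟦α.trans ((Path.refl y).trans α.symm)⟧ = 1 :=
  Quotient.sound <| (Path.Homotopic.hcomp (Path.Homotopic.refl α)
    ⟨Path.Homotopy.reflTrans α.symm⟩).trans ⟨(Path.Homotopy.reflTransSymm α).symm⟩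

theorem fromPath_conj_inv (α : Path x y) (β : Path y y) :
    (fromPath ⟦α.trans (β.trans α.symm)⟧)⁻¹ = fromPath ⟦α.trans (β.symm.trans α.symm)⟧ := by
  refine Quotient.sound ?_
  rw [Path.trans_symm, Path.trans_symm, Path.symm_symm]
  exact ⟨Path.Homotopy.transAssoc α β.symm α.symm⟩

theorem conj_smallLoop_mul_mem_of_isOpen {U : Set (FundamentalGroup X x)} (hU : IsOpen[qtop x] U)
    (α : Path x y) {β : Path y y} (hβ : IsSmallLoop β) {g : FundamentalGroup X x} (hg : g ∈ U) :
    fromPath ⟦α.trans (β.trans α.symm)⟧ * g ∈ U := by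
  induction g using Path.Homotopic.Quotient.ind with | mk δ => ?_
  set V := (fun p : Path x x => fromPath ⟦p⟧) ⁻¹' U
  have hV : IsOpen V := isOpen_coinduced.1 hU
  have hrefl : (δ.trans α).trans ((Path.refl y).trans α.symm) ∈ V := by
    rwa [mem_preimage, fromPath_trans_conj, fromPath_conj_refl, one_mul]
  obtain ⟨β', hββ', hβ'⟩ := hβ.exists_homotopic_trans_mem _ _ (hV.mem_nhds hrefl)
  have hconj : fromPath ⟦α.trans (β.trans α.symm)⟧ = fromPath ⟦α.trans (β'.trans α.symm)⟧ :=
    Quotient.sound ((Path.Homotopic.refl α).hcomp (hββ'.hcomp (.refl _)))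
  rwa [mem_preimage, fromPath_trans_conj, ← hconj] at hβ'

theorem sgSubgroup_le_stabilizer_of_isOpen {U : Set (FundamentalGroup X x)}
    (hU : IsOpen[qtop x] U) : sgSubgroup x ≤ MulAction.stabilizer _ U := by
  refine Subgroup.closure_le _ |>.2 ?_
  rintro _ ⟨y, α, β, hβ, rfl⟩
  refine MulAction.mem_stabilizer_set.2 fun g =>
    ⟨fun hg => ?_, conj_smallLoop_mul_mem_of_isOpen hU α hβ⟩
  have := conj_smallLoop_mul_mem_of_isOpen hU α hβ.symm hg
  rwa [← fromPath_conj_inv, smul_eq_mul, inv_mul_cancel_left] at this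

end

/-- If `X` is a small generated space (`π₁(X, x) = π₁ˢᵍ(X, x)` for all `x`), then
`π₁ᑫᵗᵒᵖ(X, x)` carries the indiscrete topology. -/
theorem qtop_indiscrete_of_small_generated {X : TopCat}
    (h : ∀ y : X, (sgSubgroup y : Set (FundamentalGroup X y)) = Set.univ) :
    ∀ x : X, qtop x = ⊤ := by
  intro x
  have hsg : sgSubgroup x = ⊤ := Subgroup.coe_eq_univ.1 (h x)
  refine TopologicalSpace.eq_top_of_forall_isOpen_stabilizer_eq_top _ fun U hU => ?_
  exact top_unique (hsg ▸ sgSubgroup_le_stabilizer_of_isOpen hU)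
end
end

section
/- If p : (X̃, x̃) → (X, x) is a covering map, then p maps the SG subgroup of X̃ onto the SG subgroup of X: p_*(π₁^sg(X̃, x̃)) = π₁^sg(X, x). -/
/-!
Pushing forward along a continuous map sends small loops to small loops, so `p_*` maps the
generators `α β α⁻¹` of the SG subgroup upstairs to generators downstairs. Conversely, given such a
generator downstairs, lift `α` from `x̃` and `β` from the endpoint of that lift. The lift of `β`
is again a small loop: for a neighbourhood `W` of its base point and a sheet `V` through it, `β`
is homotopic to a loop in `p (V ∩ W)`, which lifts through `V` to a loop in `W`, and homotopic
paths have homotopic lifts with the same endpoints. Since a homomorphism maps the subgroup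
generated by a set onto the subgroup generated by its image, this suffices.
-/

open FundamentalGroup

attribute [local instance] Path.Homotopic.setoid

noncomputable section

section LoopLifting

variable {E X : Type*} [TopologicalSpace E] [TopologicalSpace X] {p : E → X}

theorem IsLocalHomeomorph.exists_nhds_forall_loop_lift (hp : IsLocalHomeomorph p) {e : E}
    {W : Set E} (hW : IsOpen W) (heW : e ∈ W) :
    ∃ U : Set X, IsOpen U ∧ p e ∈ U ∧ ∀ γ : Path (p e) (p e), (∀ t, γ t ∈ U) →
      ∃ Γ : Path e e, (∀ t, Γ t ∈ W) ∧ p ∘ Γ = γ := by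
  obtain ⟨φ, heφ, rfl⟩ := hp e
  refine ⟨φ '' (φ.source ∩ W), φ.isOpen_image_source_inter hW, ⟨e, ⟨heφ, heW⟩, rfl⟩,
    fun γ hγU => ?_⟩
  have hγ : ∀ t, γ t ∈ φ.target ∧ φ.symm (γ t) ∈ W := fun t => by
    obtain ⟨v, ⟨hv, hvW⟩, hvγ⟩ := hγU t
    rw [← hvγ, φ.left_inv hv]
    exact ⟨φ.map_source hv, hvW⟩
  refine ⟨{ toFun := fun t => φ.symm (γ t)
            continuous_toFun :=
              φ.continuousOn_symm.comp_continuous γ.continuous fun t => (hγ t).1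
            source' := by simp [φ.left_inv heφ]
            target' := by simp [φ.left_inv heφ] },
    fun t => (hγ t).2, funext fun t => φ.right_inv (hγ t).1⟩

theorem IsCoveringMap.exists_path_lift (hp : IsCoveringMap p) (e : E) {x : X}
    (γ : Path (p e) x) : ∃ (e' : E) (Γ : Path e e'), p ∘ Γ = γ :=
  ⟨_, ⟨hp.liftPath γ.toContinuousMap e γ.source, hp.liftPath_zero _ _ γ.source, rfl⟩,
    hp.liftPath_lifts _ _ γ.source⟩

theorem IsCoveringMap.exists_homotopic_lift (hp : IsCoveringMap p) {x y : X}
    {γ₀ γ₁ : Path x y} (h : γ₀.Homotopic γ₁) {e e' : E} (Γ₀ : Path e e') (hΓ₀ : p ∘ Γ₀ = γ₀) :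
    ∃ Γ₁ : Path e e', p ∘ Γ₁ = γ₁ ∧ Γ₀.Homotopic Γ₁ := by
  have hx : x = p e := by simpa using (congrFun hΓ₀ 0).symm
  have h₀ : γ₀.toContinuousMap 0 = p e := γ₀.source.trans hx
  have h₁ : γ₁.toContinuousMap 0 = p e := γ₁.source.trans hx
  have hlift : hp.liftPath γ₀.toContinuousMap e h₀ = Γ₀.toContinuousMap :=
    ((hp.eq_liftPath_iff' h₀).2 ⟨hΓ₀, Γ₀.source⟩).symm
  have hend : hp.liftPath γ₁.toContinuousMap e h₁ 1 = e' := by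
    rw [← hp.liftPath_apply_one_eq_of_homotopicRel h e h₀ h₁, hlift]
    exact Γ₀.target
  refine ⟨⟨hp.liftPath γ₁.toContinuousMap e h₁, hp.liftPath_zero _ _ h₁, hend⟩,
    hp.liftPath_lifts _ _ h₁, ?_⟩
  have := hp.homotopicRel_liftPath h e h₀ h₁
  rwa [hlift] at this

end LoopLifting

theorem IsSmallLoop.map {X Y : TopCat} {f : X → Y} (hf : Continuous f) {y : X} {β : Path y y}
    (hβ : IsSmallLoop β) : IsSmallLoop (β.map hf) := by
  intro U hU hyU
  obtain ⟨β', hβ'U, hββ'⟩ := hβ (f ⁻¹' U) (hU.preimage hf) hyU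
  exact ⟨β'.map hf, hβ'U, hββ'.map ⟨f, hf⟩⟩

theorem IsCoveringMap.exists_isSmallLoop_lift {E X : TopCat} {p : E → X} (hp : IsCoveringMap p)
    (e : E) {β : Path (p e) (p e)} (hβ : IsSmallLoop β) :
    ∃ B : Path e e, B.map hp.continuous = β ∧ IsSmallLoop B := by
  have lift_near : ∀ W : Set E, IsOpen W → e ∈ W →
      ∃ M : Path e e, (∀ t, M t ∈ W) ∧ ∃ B : Path e e, p ∘ B = β ∧ M.Homotopic B := by
    intro W hW heW
    obtain ⟨U, hU, heU, hlift⟩ := hp.isLocalHomeomorph.exists_nhds_forall_loop_lift hW heW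
    obtain ⟨γ, hγU, hβγ⟩ := hβ U hU heU
    obtain ⟨M, hMW, hMγ⟩ := hlift γ hγU
    exact ⟨M, hMW, hp.exists_homotopic_lift hβγ.symm M hMγ⟩
  obtain ⟨-, -, B, hB, -⟩ := lift_near Set.univ isOpen_univ trivial
  refine ⟨B, Path.ext hB, fun W hW heW => ?_⟩
  obtain ⟨M, hMW, B', hB', hMB'⟩ := lift_near W hW heW
  have hB'B : B' = B :=
    Path.ext (hp.eq_of_comp_eq B'.continuous B.continuous (hB'.trans hB.symm) 0 (by simp))
  exact ⟨M, hMW, (hB'B ▸ hMB').symm⟩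

def sgGenerators {X : TopCat} (x : X) : Set (FundamentalGroup X x) :=
  {g | ∃ (y : X) (α : Path x y) (β : Path y y),
    IsSmallLoop β ∧ g = fromPath ⟦α.trans (β.trans α.symm)⟧}

theorem sgSubgroup_eq_closure {X : TopCat} (x : X) :
    sgSubgroup x = Subgroup.closure (sgGenerators x) := rfl

theorem FundamentalGroup.map_fromPath_mk {X Y : TopCat} {f : X → Y} (hf : Continuous f) {x : X}
    (γ : Path x x) : FundamentalGroup.map ⟨f, hf⟩ x (fromPath ⟦γ⟧) = fromPath ⟦γ.map hf⟧ :=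
  rfl

theorem FundamentalGroup.map_fromPath_conj {X Y : TopCat} {f : X → Y} (hf : Continuous f)
    {x y : X} (α : Path x y) (β : Path y y) :
    FundamentalGroup.map ⟨f, hf⟩ x (fromPath ⟦α.trans (β.trans α.symm)⟧) =
      fromPath ⟦(α.map hf).trans ((β.map hf).trans (α.map hf).symm)⟧ := by
  rw [map_fromPath_mk, Path.map_trans, Path.map_trans, Path.map_symm]

theorem image_map_sgGenerators_subset {X Y : TopCat} {f : X → Y} (hf : Continuous f) (x : X) :
    FundamentalGroup.map ⟨f, hf⟩ x '' sgGenerators x ⊆ sgGenerators (f x) := by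
  rintro _ ⟨_, ⟨y, α, β, hβ, rfl⟩, rfl⟩
  exact ⟨f y, α.map hf, β.map hf, hβ.map hf, FundamentalGroup.map_fromPath_conj hf α β⟩

theorem IsCoveringMap.sgGenerators_subset_image_map {E X : TopCat} {p : E → X}
    (hp : IsCoveringMap p) (x₀ : E) :
    sgGenerators (p x₀) ⊆ FundamentalGroup.map ⟨p, hp.continuous⟩ x₀ '' sgGenerators x₀ := by
  rintro _ ⟨y, α, β, hβ, rfl⟩
  obtain ⟨e, A, hA⟩ := hp.exists_path_lift x₀ α
  obtain rfl : p e = y := by simpa using congrFun hA 1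
  obtain ⟨B, hB, hBsmall⟩ := hp.exists_isSmallLoop_lift e hβ
  have hAα : A.map hp.continuous = α := Path.ext hA
  refine ⟨_, ⟨e, A, B, hBsmall, rfl⟩, ?_⟩
  rw [FundamentalGroup.map_fromPath_conj, hAα, hB]

/-- A covering map `p : (X̃, x₀) → (X, x)` maps the SG subgroup of `X̃` onto the SG subgroup
of `X`: `p₊(π₁ˢᵍ(X̃, x₀)) = π₁ˢᵍ(X, x)`. -/
theorem image_sgSubgroup_of_covering {E X : TopCat} (p : E → X) (hp : IsCoveringMap p)
    (x₀ : E) :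
    (fun g : FundamentalGroup E x₀ =>
        fromPath (Path.Homotopic.Quotient.map (toPath g) ⟨p, hp.continuous⟩)) ''
      (sgSubgroup x₀ : Set (FundamentalGroup E x₀)) =
      (sgSubgroup (p x₀) : Set (FundamentalGroup X (p x₀))) := by
  change FundamentalGroup.map ⟨p, hp.continuous⟩ x₀ '' _ = _
  rw [sgSubgroup_eq_closure, sgSubgroup_eq_closure, ← Subgroup.coe_map, MonoidHom.map_closure,
    (image_map_sgGenerators_subset hp.continuous x₀).antisymm
      (hp.sgGenerators_subset_image_map x₀)]
end
end
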